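/- arXiv:2303.03980 — 2 statements merged into one kernel-verified Lean document; each statement's English description precedes it below -/
import Mathlib

section
/- Let V be a rooted directed tree of finite length with root v0 and μ=(μ_v)_{v∈V} a weight of nonzero scalars. (a) Let 1<p<∞ with conjugate exponent p*, and suppose ∑_{u∈Chi(v)}|μ_u|^{-p*}<∞ for all v∈V. Then there exists a unique backward invariant sequence f on V with f(v0)=1 such that (∑_{v∈V}|f(v)μ_v|^p)^{1/p}=r_p(V,μ), equivalently such that (∑_{v∈V,v≠v0}|f(v)μ_v|^p)^{1/p}=c_p(V,μ); for any v=v_n∈gen_n, n≥1, it is given by f(v)=∏_{k=1}^n [r_p(V(v_k),μ)^{-p*} / ∑_{u∈Chi(par(v_k))} r_p(V(u),μ)^{-p*}] > 0, where (v0,v1,…,v_n) is the path from v0 to v_n. (b) Suppose ∑_{u∈Chi(v)}|μ_u|^{-1}<∞ for all v∈V. Then there exists a backward invariant sequence f on V with f(v0)=1 such that sup_{v∈V}|f(v)μ_v|=r_∞(V,μ) and sup_{v∈V,v≠v0}|f(v)μ_v|=c_∞(V,μ); one such f is given, for v=v_n∈gen_n, n≥1, by f(v)=∏_{k=1}^n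 [r_∞(V(v_k),μ)^{-1} / ∑_{u∈Chi(par(v_k))} r_∞(V(u),μ)^{-1}] > 0, where (v0,v1,…,v_n) is the path from v0 to v_n. -/
open scoped ENNReal NNReal Topology Classical
open Filter

namespace PaperTree

/-! ### Directed trees -/

variable {V : Type*}

/-- Iterated parent map of a directed tree given by a parent function. -/
def parIter (par : V → Option V) : ℕ → V → Option V
  | 0, v => some v
  | n + 1, v => (par v).bind (parIter par n)

/-- `par` is the parent function of a (countable, connected, acyclic) directed tree on `V`,
in which every vertex has at most one parent and at most one vertex (the root) has none. -/
structure IsDirectedTree (par : V → Option V) : Prop where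
  countable : Countable V
  acyclic : ∀ (v : V) (n : ℕ), 0 < n → parIter par n v ≠ some v
  connected : ∀ u v : V, ∃ (m n : ℕ) (w : V), parIter par m u = some w ∧ parIter par n v = some w
  root_unique : ∀ u v : V, par u = none → par v = none → u = v

/-- The set of children of `v`. -/
def children (par : V → Option V) (v : V) : Set V := {u : V | par u = some v}

/-- The set of descendants of `v` (including `v`); the rooted subtree `V(v)`. -/
def descendants (par : V → Option V) (v : V) : Set V := {u : V | ∃ n : ℕ, parIter par n u = some v}

def IsLeafV (par : V → Option V) (v : V) : Prop := children par v = ∅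

def Leafless (par : V → Option V) : Prop := ∀ v : V, children par v ≠ ∅

def IsRoot (par : V → Option V) (v : V) : Prop := par v = none

def Rooted (par : V → Option V) : Prop := ∃ v : V, IsRoot par v

def Unrooted (par : V → Option V) : Prop := ∀ v : V, par v ≠ none

/-- The tree has a free left end: some vertex all of whose (proper) ancestors
have exactly one child. -/
def HasFreeLeftEnd (par : V → Option V) : Prop :=
  ∃ v : V, ∀ n : ℕ, 1 ≤ n → ∀ w : V, parIter par n v = some w → ∃! u : V, u ∈ children par w

/-- The tree has finite length (all branches have uniformly bounded length). -/
def FiniteLength (par : V → Option V) : Prop := ∃ m : ℕ, ∀ u : V, parIter par (m + 1) u = none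

/-- Product of the weights along the upward path of length `n` ending at `u`;
for `u ∈ Chi^n(v)` this is `λ(v → u)`, and `pathProd par lam n v = λ(par^n(v) → v)`. -/
def pathProd {𝕜 : Type*} [Monoid 𝕜] (par : V → Option V) (lam : V → 𝕜) : ℕ → V → 𝕜
  | 0, _ => 1
  | n + 1, u => lam u * ((par u).elim 1 (pathProd par lam n))

/-- A (finite or infinite, maximal) branch starting at `v`, encoded with `Option`. -/
def IsOptBranch (par : V → Option V) (v : V) (b : ℕ → Option V) : Prop :=
  b 0 = some v ∧
  (∀ (k : ℕ) (w : V), b k = some w →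
      (children par w = ∅ ∧ b (k + 1) = none) ∨ ∃ u ∈ children par w, b (k + 1) = some u) ∧
  ∀ k : ℕ, b k = none → b (k + 1) = none

/-- An infinite branch starting at `v` (adequate for leafless trees). -/
def IsBranch (par : V → Option V) (v : V) (b : ℕ → V) : Prop :=
  b 0 = v ∧ ∀ k : ℕ, b (k + 1) ∈ children par (b k)

/-- The `[0,∞]`-valued absolute weight associated with a scalar weight. -/
noncomputable def nw {𝕜 : Type*} [RCLike 𝕜] (μ : V → 𝕜) : V → ℝ≥0∞ := fun v => (‖μ v‖₊ : ℝ≥0∞)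

/-! ### Fixed points over subtrees and backward invariant sequences -/

section Invariance

variable {𝕜 : Type*} [RCLike 𝕜] {V : Type*}

/-- The restriction of `g` to the subtree `W` is a fixed point of the weighted backward
shift over `W`: `g w = ∑_{u ∈ Chi(w) ∩ W} λ_u g u` (unconditionally) for every `w ∈ W`. -/
def FixedPtOver (par : V → Option V) (lam : V → 𝕜) (g : V → 𝕜) (W : Set V) : Prop :=
  ∀ w ∈ W, HasSum (fun u : ↥(children par w ∩ W) => lam u.1 * g u.1) (g w)

/-- `g` is backward invariant with respect to the children map `chi`:
`g v = ∑_{u ∈ chi v} g u` (unconditionally) for every non-leaf `v`. -/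
def BackwardInv (chi : V → Set V) (g : V → 𝕜) : Prop :=
  ∀ v : V, chi v ≠ ∅ → HasSum (fun u : ↥(chi v) => g u.1) (g v)

/-- Backward invariance over a subtree `W` (with respect to the children map `chi`). -/
def BackwardInvOn (chi : V → Set V) (W : Set V) (g : V → 𝕜) : Prop :=
  ∀ w ∈ W, (chi w ∩ W).Nonempty → HasSum (fun u : ↥(chi w ∩ W) => g u.1) (g w)

/-- A scalar that is a (strictly) positive real. -/
def IsPosScalar {𝕜 : Type*} [RCLike 𝕜] (c : 𝕜) : Prop := ∃ r : ℝ, 0 < r ∧ c = (r : 𝕜)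

end Invariance

/-! ### The generalized continued fractions `c_p` and resistances `r_p` -/

section Constants

/-- Conjugate exponent. -/
noncomputable def conjExp (p : ℝ) : ℝ := p / (p - 1)

variable {V : Type*}

/-- `cpAux chi w p m v` is the continued fraction `c_p` of the subtree of descendants of `v`
(with respect to the children map `chi`) truncated at depth `m`, with weight `w`. -/
noncomputable def cpAux (chi : V → Set V) (w : V → ℝ≥0∞) (p : ℝ) : ℕ → V → ℝ≥0∞
  | 0, _ => 0
  | m + 1, v =>
      if chi v = ∅ then 0
      else (∑' u : ↥(chi v),
              (w u.1 ^ p + cpAux chi w p m u.1 ^ p) ^ (-(conjExp p / p))) ^ (-(1 / conjExp p))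

/-- The continued fraction `c_p(V(v), w)` of order `1 < p < ∞`. -/
noncomputable def cpC (chi : V → Set V) (w : V → ℝ≥0∞) (p : ℝ) (v : V) : ℝ≥0∞ :=
  ⨆ m : ℕ, cpAux chi w p m v

/-- The resistance `r_p(V(v), w)` of order `1 < p < ∞`. -/
noncomputable def rpC (chi : V → Set V) (w : V → ℝ≥0∞) (p : ℝ) (v : V) : ℝ≥0∞ :=
  (w v ^ p + cpC chi w p v ^ p) ^ (1 / p)

/-- Truncated continued fraction of order `p = ∞`. -/
noncomputable def cInfAux (chi : V → Set V) (w : V → ℝ≥0∞) : ℕ → V → ℝ≥0∞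
  | 0, _ => 0
  | m + 1, v =>
      if chi v = ∅ then 0
      else (∑' u : ↥(chi v), (max (w u.1) (cInfAux chi w m u.1))⁻¹)⁻¹

/-- The continued fraction `c_∞(V(v), w)`. -/
noncomputable def cInfC (chi : V → Set V) (w : V → ℝ≥0∞) (v : V) : ℝ≥0∞ :=
  ⨆ m : ℕ, cInfAux chi w m v

/-- The resistance `r_∞(V(v), w)`. -/
noncomputable def rInfC (chi : V → Set V) (w : V → ℝ≥0∞) (v : V) : ℝ≥0∞ :=
  max (w v) (cInfC chi w v)

end Constants

/-! ### Weighted `ℓ^p`- and sup-norms on subsets of vertices -/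

section Norms

variable {𝕜 : Type*} [RCLike 𝕜] {V : Type*}

/-- `(∑_{v ∈ S} (|g v| w v)^p)^{1/p}` in `[0,∞]`. -/
noncomputable def lpSumOn (w : V → ℝ≥0∞) (p : ℝ) (S : Set V) (g : V → 𝕜) : ℝ≥0∞ :=
  (∑' v : ↥S, ((‖g v.1‖₊ : ℝ≥0∞) * w v.1) ^ p) ^ (1 / p)

/-- `sup_{v ∈ S} |g v| w v` in `[0,∞]`. -/
noncomputable def supNormOn (w : V → ℝ≥0∞) (S : Set V) (g : V → 𝕜) : ℝ≥0∞ :=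
  ⨆ v : ↥S, (‖g v.1‖₊ : ℝ≥0∞) * w v.1

end Norms


/-!
On a tree of finite length the truncated continued fractions stabilise, so `c_p` satisfies its
recursion `c_p(v) = (∑_{u ∈ Chi(v)} r_p(u)^{-p*})^{-1/p*}` exactly, and every claim can be proved
by induction from the leaves up. Splitting the unit mass at the root, and then at every vertex, in
proportion to `r_p(u)^{-p*}` gives a positive backward invariant `f` with
`∑_{x ∈ V(v)} (|f x| μ_x)^p = (f(v) r_p(v))^p`, while Hölder's inequality at each vertex gives
`≥` for every backward invariant `g`. A second minimiser `g ≠ f` is impossible: by strict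
convexity of `t ↦ t^p` and of the norm, `(f + g) / 2` would be backward invariant with a strictly
smaller norm. For `p = ∞` the same construction with weights `r_∞(u)⁻¹` makes `f(u) r_∞(u)` equal
to `f(v) c_∞(v)` for all children `u` of `v`, which gives the identities for the sup norms.
-/

open Set

section Analysis

theorem rpow_neg_le_rpow_neg {x y : ℝ≥0∞} {c : ℝ} (hc : 0 ≤ c) (h : x ≤ y) :
    y ^ (-c) ≤ x ^ (-c) := by
  rw [ENNReal.rpow_neg, ENNReal.rpow_neg]
  exact ENNReal.inv_le_inv.2 (ENNReal.rpow_le_rpow h hc)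

theorem rpow_neg_ne_zero {x : ℝ≥0∞} {c : ℝ} (hc : 0 ≤ c) (hx : x ≠ ⊤) : x ^ (-c) ≠ 0 := by
  simp [ENNReal.rpow_eq_zero_iff, hx, hc]

theorem rpow_neg_ne_top {x : ℝ≥0∞} {c : ℝ} (hc : 0 ≤ c) (hx : x ≠ 0) : x ^ (-c) ≠ ⊤ := by
  simp [ENNReal.rpow_eq_top_iff, hx, hc]

theorem rpow_one_div_eq_iff {x y : ℝ≥0∞} {p : ℝ} (hp : p ≠ 0) :
    x ^ (1 / p) = y ↔ x = y ^ p := by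
  rw [one_div]
  constructor
  · rintro rfl
    rw [ENNReal.rpow_inv_rpow hp]
  · rintro rfl
    rw [ENNReal.rpow_rpow_inv hp]

theorem tsum_mul_le_Lp_mul_Lq {ι : Type*} (f g : ι → ℝ≥0∞) {p q : ℝ}
    (hpq : p.HolderConjugate q) :
    ∑' i, f i * g i ≤ (∑' i, f i ^ p) ^ (1 / p) * (∑' i, g i ^ q) ^ (1 / q) := by
  let _ : MeasurableSpace ι := ⊤
  have : MeasurableSingletonClass ι := ⟨fun _ => trivial⟩
  simpa [MeasureTheory.lintegral_count] using
    ENNReal.lintegral_mul_le_Lp_mul_Lq MeasureTheory.Measure.count hpq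
      (measurable_from_top (f := f)).aemeasurable (measurable_from_top (f := g)).aemeasurable

theorem norm_midpoint_rpow_lt {E : Type*} [NormedAddCommGroup E] [NormedSpace ℝ E]
    [StrictConvexSpace ℝ E] {p : ℝ} (hp : 1 < p) {a b : E} (hab : a ≠ b) :
    ‖(1 / 2 : ℝ) • (a + b)‖ ^ p < (‖a‖ ^ p + ‖b‖ ^ p) / 2 := by
  have hp0 : 0 < p := by linarith
  by_cases hn : ‖a‖ = ‖b‖
  · calc ‖(1 / 2 : ℝ) • (a + b)‖ ^ p < ‖a‖ ^ p :=
          Real.rpow_lt_rpow (norm_nonneg _) ((norm_midpoint_lt_iff hn).2 hab) hp0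
      _ = (‖a‖ ^ p + ‖b‖ ^ p) / 2 := by rw [← hn]; ring
  · calc ‖(1 / 2 : ℝ) • (a + b)‖ ^ p ≤ ((‖a‖ + ‖b‖) / 2) ^ p := by
          refine Real.rpow_le_rpow (norm_nonneg _) ?_ hp0.le
          rw [norm_smul, Real.norm_of_nonneg (by norm_num)]
          linarith [norm_add_le a b]
      _ = ((1 / 2 : ℝ) • ‖a‖ + (1 / 2 : ℝ) • ‖b‖) ^ p := by
          simp only [smul_eq_mul]
          ring_nf
      _ < (1 / 2 : ℝ) • ‖a‖ ^ p + (1 / 2 : ℝ) • ‖b‖ ^ p :=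
          (strictConvexOn_rpow hp).2 (mem_Ici.2 (norm_nonneg a)) (mem_Ici.2 (norm_nonneg b))
            hn (by norm_num) (by norm_num) (by norm_num)
      _ = (‖a‖ ^ p + ‖b‖ ^ p) / 2 := by simp only [smul_eq_mul]; ring

variable {𝕜 : Type*} [RCLike 𝕜] {p : ℝ}

theorem enorm_ofReal_toReal {x : ℝ≥0∞} (hx : x ≠ ⊤) :
    ‖((x.toReal : ℝ) : 𝕜)‖ₑ = x := by
  rw [← ofReal_norm, RCLike.norm_of_nonneg ENNReal.toReal_nonneg, ENNReal.ofReal_toReal hx]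

theorem rpow_enorm_midpoint_mul_lt (hp : 1 < p) {a b : 𝕜} (hab : a ≠ b) {t : ℝ≥0∞}
    (ht0 : t ≠ 0) (htt : t ≠ ⊤) :
    (‖(a + b) / 2‖ₑ * t) ^ p < ((‖a‖ₑ * t) ^ p + (‖b‖ₑ * t) ^ p) / 2 := by
  have hp0 : 0 < p := by linarith
  have hmid : (a + b) / 2 = (1 / 2 : ℝ) • (a + b) := by
    rw [RCLike.real_smul_eq_coe_mul]
    push_cast
    ring
  have key := norm_midpoint_rpow_lt hp hab
  simp only [← ofReal_norm, ENNReal.mul_rpow_of_nonneg _ _ hp0.le,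
    ENNReal.ofReal_rpow_of_nonneg (norm_nonneg _) hp0.le, hmid]
  rw [← add_mul, ENNReal.div_eq_inv_mul, ← mul_assoc, ENNReal.mul_lt_mul_iff_left
    (ENNReal.rpow_pos (pos_iff_ne_zero.2 ht0) htt).ne'
    (ENNReal.rpow_ne_top_of_nonneg hp0.le htt),
    ← ENNReal.ofReal_add (by positivity) (by positivity), ← ENNReal.div_eq_inv_mul,
    ← ENNReal.ofReal_ofNat 2, ← ENNReal.ofReal_div_of_pos (by norm_num)]
  exact ENNReal.ofReal_lt_ofReal_iff'.2 ⟨key, (by positivity : (0 : ℝ) ≤ _).trans_lt key⟩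

theorem rpow_enorm_midpoint_mul_le (hp : 1 < p) (a b : 𝕜) {t : ℝ≥0∞} (htt : t ≠ ⊤) :
    (‖(a + b) / 2‖ₑ * t) ^ p ≤ ((‖a‖ₑ * t) ^ p + (‖b‖ₑ * t) ^ p) / 2 := by
  rcases eq_or_ne a b with rfl | hab
  · rw [add_self_div_two, ENNReal.add_div, ENNReal.add_halves]
  rcases eq_or_ne t 0 with rfl | ht0
  · simp [ENNReal.zero_rpow_of_pos (by linarith : 0 < p)]
  exact (rpow_enorm_midpoint_mul_lt hp hab ht0 htt).le

/-- Strict convexity of `g ↦ ∑ (‖g i‖ w i)^p`. -/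
theorem eq_of_tsum_rpow_le_tsum_rpow_midpoint {ι : Type*} (hp : 1 < p) {w : ι → ℝ≥0∞}
    (hw0 : ∀ i, w i ≠ 0) (hwt : ∀ i, w i ≠ ⊤) {f g : ι → 𝕜}
    (hf : ∑' i, (‖f i‖ₑ * w i) ^ p ≠ ⊤)
    (hg : ∑' i, (‖g i‖ₑ * w i) ^ p ≤ ∑' i, (‖f i‖ₑ * w i) ^ p)
    (hmid : ∑' i, (‖f i‖ₑ * w i) ^ p ≤ ∑' i, (‖(f i + g i) / 2‖ₑ * w i) ^ p) : f = g := by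
  by_contra hne
  obtain ⟨i, hi⟩ := Function.ne_iff.1 hne
  have havg :
      ∑' i, ((‖f i‖ₑ * w i) ^ p + (‖g i‖ₑ * w i) ^ p) / 2 ≤ ∑' i, (‖f i‖ₑ * w i) ^ p := by
    simp only [div_eq_mul_inv, ENNReal.tsum_mul_right, ENNReal.tsum_add]
    rw [← div_eq_mul_inv]
    exact ENNReal.div_le_of_le_mul (by rw [mul_two]; gcongr)
  have hlt := ENNReal.tsum_lt_tsum
    (ne_top_of_le_ne_top hf ((ENNReal.tsum_le_tsum fun j =>
      rpow_enorm_midpoint_mul_le hp _ _ (hwt j)).trans havg))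
    (fun j => rpow_enorm_midpoint_mul_le hp _ _ (hwt j))
    (rpow_enorm_midpoint_mul_lt hp hi (hw0 i) (hwt i))
  exact (hmid.trans_lt (hlt.trans_le havg)).false

end Analysis

section Tree

variable {par : V → Option V}

theorem parIter_succ' (par : V → Option V) (k : ℕ) (x : V) :
    parIter par (k + 1) x = (parIter par k x).bind par := by
  induction k generalizing x with
  | zero => show (par x).bind (parIter par 0) = par x; cases par x <;> rfl
  | succ k ih => cases h : par x <;> simp [parIter, h, ← ih]

theorem parIter_add (par : V → Option V) (a b : ℕ) (x : V) :
    parIter par (a + b) x = (parIter par b x).bind (parIter par a) := by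
  induction b generalizing x with
  | zero => rfl
  | succ b ih => cases h : par x <;> simp [parIter, h, ih]

theorem parIter_succ_of_mem_children {k : ℕ} {x u v : V} (hx : parIter par k x = some u)
    (hu : u ∈ children par v) : parIter par (k + 1) x = some v := by
  rw [parIter_succ', hx]
  exact hu

theorem IsDirectedTree.eq_of_parIter_eq (hT : IsDirectedTree par) {x y : V} {a b : ℕ}
    (ha : parIter par a x = some y) (hb : parIter par b x = some y) : a = b := by
  wlog hab : a ≤ b generalizing a b
  · exact (this hb ha (by omega)).symm
  obtain ⟨c, rfl⟩ := Nat.exists_eq_add_of_le hab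
  rw [Nat.add_comm, parIter_add, ha] at hb
  by_contra hc
  exact hT.acyclic y c (by omega) hb

theorem descendants_eq_insert_iUnion (par : V → Option V) (v : V) :
    descendants par v = insert v (⋃ u : children par v, descendants par u) := by
  ext x
  simp only [mem_insert_iff, mem_iUnion, descendants, Subtype.exists, children]
  constructor
  · rintro ⟨_ | k, hk⟩
    · exact Or.inl (Option.some_injective _ hk)
    · rw [parIter_succ'] at hk
      cases hu : parIter par k x with
      | none => simp [hu] at hk
      | some u => exact Or.inr ⟨u, by simpa [hu] using hk, k, hu⟩
  · rintro (rfl | ⟨u, hu, k, hk⟩)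
    · exact ⟨0, rfl⟩
    · exact ⟨k + 1, parIter_succ_of_mem_children hk hu⟩

theorem IsDirectedTree.notMem_iUnion_descendants_children (hT : IsDirectedTree par) (v : V) :
    v ∉ ⋃ u : children par v, descendants par u := by
  simp only [mem_iUnion, not_exists]
  rintro ⟨u, hu⟩ ⟨k, hk⟩
  exact hT.acyclic v (k + 1) k.succ_pos (parIter_succ_of_mem_children hk hu)

theorem IsDirectedTree.pairwise_disjoint_descendants_children (hT : IsDirectedTree par)
    (v : V) :
    Pairwise (Function.onFun Disjoint fun u : children par v => descendants par u) := by
  rintro ⟨u₁, hu₁⟩ ⟨u₂, hu₂⟩ hne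
  refine Set.disjoint_left.2 fun x ⟨a, ha⟩ ⟨b, hb⟩ => hne ?_
  obtain rfl : a = b := by
    have := hT.eq_of_parIter_eq (parIter_succ_of_mem_children ha hu₁)
      (parIter_succ_of_mem_children hb hu₂)
    omega
  exact Subtype.ext (Option.some_injective _ (ha.symm.trans hb))

theorem IsDirectedTree.tsum_iUnion_descendants_children (hT : IsDirectedTree par)
    (φ : V → ℝ≥0∞) (v : V) :
    ∑' x : ⋃ u : children par v, descendants par u, φ x =
      ∑' (u : children par v) (x : descendants par u), φ x :=
  ENNReal.tsum_biUnion fun _ _ _ _ h => hT.pairwise_disjoint_descendants_children v h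

theorem IsDirectedTree.tsum_descendants (hT : IsDirectedTree par) (φ : V → ℝ≥0∞) (v : V) :
    ∑' x : descendants par v, φ x =
      φ v + ∑' (u : children par v) (x : descendants par u), φ x := by
  rw [descendants_eq_insert_iUnion, insert_eq, ENNReal.summable.tsum_union_disjoint
    (disjoint_singleton_left.2 (hT.notMem_iUnion_descendants_children v)) ENNReal.summable,
    tsum_singleton, hT.tsum_iUnion_descendants_children]

theorem iSup_iUnion_descendants_children (par : V → Option V) (φ : V → ℝ≥0∞) (v : V) :
    ⨆ x : ⋃ u : children par v, descendants par u, φ x =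
      ⨆ (u : children par v) (x : descendants par u), φ x := by
  rw [iSup_subtype'', iSup_iUnion]
  exact iSup_congr fun u => (iSup_subtype'' _ _).symm

theorem iSup_descendants (par : V → Option V) (φ : V → ℝ≥0∞) (v : V) :
    ⨆ x : descendants par v, φ x =
      max (φ v) (⨆ (u : children par v) (x : descendants par u), φ x) := by
  rw [descendants_eq_insert_iUnion, ← iSup_iUnion_descendants_children, iSup_subtype'',
    iSup_insert, iSup_subtype'']

end Tree

section Root

variable {par : V → Option V} {root : V}

noncomputable def depth (par : V → Option V) (root : V) (v : V) : ℕ :=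
  sInf {n | parIter par n v = some root}

theorem IsDirectedTree.exists_parIter_eq_root (hT : IsDirectedTree par)
    (hroot : IsRoot par root) (v : V) : ∃ n, parIter par n v = some root := by
  obtain ⟨a, _ | b, x, ha, hb⟩ := hT.connected v root
  · exact ⟨a, ha.trans hb.symm⟩
  · simp [parIter, show par root = none from hroot] at hb

theorem IsDirectedTree.parIter_depth (hT : IsDirectedTree par) (hroot : IsRoot par root)
    (v : V) : parIter par (depth par root v) v = some root :=
  Nat.sInf_mem (hT.exists_parIter_eq_root hroot v)

theorem IsDirectedTree.depth_eq (hT : IsDirectedTree par) (hroot : IsRoot par root) {v : V}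
    {n : ℕ} (h : parIter par n v = some root) : depth par root v = n :=
  hT.eq_of_parIter_eq (hT.parIter_depth hroot v) h

theorem IsDirectedTree.depth_root (hT : IsDirectedTree par) (hroot : IsRoot par root) :
    depth par root root = 0 :=
  hT.depth_eq hroot rfl

theorem IsDirectedTree.depth_of_mem_children (hT : IsDirectedTree par)
    (hroot : IsRoot par root) {u v : V} (hu : u ∈ children par v) :
    depth par root u = depth par root v + 1 := by
  refine hT.depth_eq hroot ?_
  show (par u).bind (parIter par _) = _
  rw [show par u = some v from hu]
  exact hT.parIter_depth hroot v

theorem IsDirectedTree.descendants_root (hT : IsDirectedTree par) (hroot : IsRoot par root) :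
    descendants par root = univ :=
  eq_univ_of_forall fun v => ⟨_, hT.parIter_depth hroot v⟩

theorem IsDirectedTree.setOf_ne_root (hT : IsDirectedTree par) (hroot : IsRoot par root) :
    {v | v ≠ root} = ⋃ u : children par root, descendants par u := by
  have h := hT.descendants_root hroot
  rw [descendants_eq_insert_iUnion] at h
  ext v
  constructor
  · intro hv
    exact (mem_insert_iff.1 (h.ge (mem_univ v))).resolve_left hv
  · rintro hv rfl
    exact hT.notMem_iUnion_descendants_children v hv

end Root

section FiniteLength

variable {par : V → Option V}

theorem FiniteLength.induction (hfin : FiniteLength par) {P : V → Prop}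
    (step : ∀ v, (∀ u ∈ children par v, P u) → P v) (v : V) : P v := by
  obtain ⟨m, hm⟩ := hfin
  suffices ∀ k v, (∀ x, parIter par k x ≠ some v) → P v from
    this (m + 1) v (by simp [hm])
  intro k
  induction k with
  | zero => exact fun v hv => absurd rfl (hv v)
  | succ k ih =>
    exact fun v hv => step v fun u hu =>
      ih u fun x hx => hv x (parIter_succ_of_mem_children hx hu)

theorem FiniteLength.iSup_iterate_eq (hfin : FiniteLength par)
    {F : (v : V) → (children par v → ℝ≥0∞) → ℝ≥0∞} (hF : ∀ v, Monotone (F v))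
    {a : ℕ → V → ℝ≥0∞} (ha0 : ∀ v, a 0 v = 0) (ha : ∀ k v, a (k + 1) v = F v fun u => a k u)
    (v : V) : ⨆ k, a k v = F v fun u => ⨆ k, a k u := by
  obtain ⟨m, hm⟩ := hfin
  have hmono : ∀ v, Monotone fun k => a k v := by
    suffices ∀ k v, a k v ≤ a (k + 1) v from
      fun v => monotone_nat_of_le_succ fun k => this k v
    intro k
    induction k with
    | zero => simp [ha0]
    | succ k ih => exact fun v => by rw [ha k, ha (k + 1)]; exact hF v fun u => ih u
  have hstable : ∀ k v, (∀ x, parIter par k x ≠ some v) → ∀ j ≥ k, a j v = a k v := by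
    intro k
    induction k with
    | zero => exact fun v hv => absurd rfl (hv v)
    | succ k ih =>
      intro v hv j hj
      obtain ⟨j, rfl⟩ := Nat.exists_eq_add_of_le' (Nat.one_le_of_lt hj)
      rw [ha, ha]
      congr 1
      funext u
      exact ih u (fun x hx => hv x (parIter_succ_of_mem_children hx u.2)) j (by omega)
  have hm' : ∀ v x, parIter par (m + 1) x ≠ some v := by simp [hm]
  have hsup : ∀ v, ⨆ k, a k v = a (m + 1) v := fun v =>
    le_antisymm (iSup_le fun j => (le_total j (m + 1)).elim (hmono v ·)
      fun h => (hstable _ v (hm' v) j h).le) (le_iSup (fun k => a k v) _)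
  rw [hsup, ← hstable _ v (hm' v) (m + 2) (by omega), ha]
  simp only [hsup]

end FiniteLength

section ContinuedFraction

variable {par : V → Option V} {w : V → ℝ≥0∞} {p : ℝ}

theorem holderConjugate_conjExp (hp : 1 < p) : p.HolderConjugate (conjExp p) :=
  Real.HolderConjugate.conjExponent hp

theorem conjExp_pos (hp : 1 < p) : 0 < conjExp p :=
  (holderConjugate_conjExp hp).symm.pos

theorem cpC_eq (hfin : FiniteLength par) (hp : 1 < p) (v : V) :
    cpC (children par) w p v = if children par v = ∅ then 0 else
      (∑' u : children par v, rpC (children par) w p u ^ (-conjExp p)) ^ (-(1 / conjExp p)) := by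
  have hq := conjExp_pos hp
  have hmono : ∀ v, Monotone fun φ : children par v → ℝ≥0∞ =>
      if children par v = ∅ then 0 else
        (∑' u : children par v, (w u ^ p + φ u ^ p) ^ (-(conjExp p / p))) ^
          (-(1 / conjExp p)) := by
    intro v φ ψ h
    dsimp only
    split_ifs
    · exact le_rfl
    · refine rpow_neg_le_rpow_neg (by positivity) (ENNReal.tsum_le_tsum fun u => ?_)
      exact rpow_neg_le_rpow_neg (by positivity) (by gcongr; exact h u)
  rw [cpC, hfin.iSup_iterate_eq hmono (a := fun k v => cpAux (children par) w p k v)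
    (fun _ => rfl) (fun _ _ => rfl)]
  congr 4 with u
  show _ = ((w u ^ p + (⨆ k, cpAux (children par) w p k u) ^ p) ^ (1 / p)) ^ (-conjExp p)
  rw [← ENNReal.rpow_mul]
  ring_nf

theorem cInfC_eq (hfin : FiniteLength par) (v : V) :
    cInfC (children par) w v = if children par v = ∅ then 0 else
      (∑' u : children par v, (rInfC (children par) w u)⁻¹)⁻¹ := by
  have hmono : ∀ v, Monotone fun φ : children par v → ℝ≥0∞ =>
      if children par v = ∅ then 0 else (∑' u : children par v, (max (w u) (φ u))⁻¹)⁻¹ := by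
    intro v φ ψ h
    dsimp only
    split_ifs
    · exact le_rfl
    · exact ENNReal.inv_le_inv.2 (ENNReal.tsum_le_tsum fun u =>
        ENNReal.inv_le_inv.2 (max_le_max le_rfl (h u)))
  exact hfin.iSup_iterate_eq hmono (a := fun k v => cInfAux (children par) w k v)
    (fun _ => rfl) (fun _ _ => rfl) v

theorem cpC_of_children_eq_empty (hfin : FiniteLength par) (hp : 1 < p) {v : V}
    (hv : children par v = ∅) : cpC (children par) w p v = 0 := by
  rw [cpC_eq hfin hp, if_pos hv]

theorem cpC_of_children_ne_empty (hfin : FiniteLength par) (hp : 1 < p) {v : V}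
    (hv : children par v ≠ ∅) : cpC (children par) w p v =
      (∑' u : children par v, rpC (children par) w p u ^ (-conjExp p)) ^ (-(1 / conjExp p)) := by
  rw [cpC_eq hfin hp, if_neg hv]

theorem rpC_rpow (hp : 0 < p) (v : V) :
    rpC (children par) w p v ^ p = w v ^ p + cpC (children par) w p v ^ p := by
  rw [rpC, ← ENNReal.rpow_mul, one_div_mul_cancel hp.ne', ENNReal.rpow_one]

theorem mul_rpC_rpow (hp : 0 < p) (x : ℝ≥0∞) (v : V) :
    (x * rpC (children par) w p v) ^ p =
      (x * w v) ^ p + (x * cpC (children par) w p v) ^ p := by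
  simp only [ENNReal.mul_rpow_of_nonneg _ _ hp.le, rpC_rpow hp, mul_add]

theorem le_rpC (hp : 0 < p) (v : V) : w v ≤ rpC (children par) w p v := by
  rw [← ENNReal.rpow_le_rpow_iff hp, rpC_rpow hp]
  exact le_self_add

theorem rpC_ne_top (hfin : FiniteLength par) (hp : 1 < p) (hwt : ∀ v, w v ≠ ⊤) (v : V) :
    rpC (children par) w p v ≠ ⊤ := by
  have hp0 : 0 < p := by linarith
  induction v using hfin.induction with
  | step v ih =>
    refine ENNReal.rpow_ne_top_of_nonneg (by positivity) (ENNReal.add_ne_top.2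
      ⟨ENNReal.rpow_ne_top_of_nonneg hp0.le (hwt v), ENNReal.rpow_ne_top_of_nonneg hp0.le ?_⟩)
    rw [cpC_eq hfin hp]
    split_ifs with hv
    · exact ENNReal.zero_ne_top
    · obtain ⟨u, hu⟩ := nonempty_iff_ne_empty.2 hv
      exact rpow_neg_ne_top (by have := conjExp_pos hp; positivity) fun h =>
        rpow_neg_ne_zero (conjExp_pos hp).le (ih u hu) (ENNReal.tsum_eq_zero.1 h ⟨u, hu⟩)

theorem rInfC_ne_top (hfin : FiniteLength par) (hwt : ∀ v, w v ≠ ⊤) (v : V) :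
    rInfC (children par) w v ≠ ⊤ := by
  induction v using hfin.induction with
  | step v ih =>
    refine max_ne_top (hwt v) ?_
    rw [cInfC_eq hfin]
    split_ifs with hv
    · exact ENNReal.zero_ne_top
    · obtain ⟨u, hu⟩ := nonempty_iff_ne_empty.2 hv
      exact ENNReal.inv_ne_top.2 fun h =>
        ENNReal.inv_ne_zero.2 (ih u hu) (ENNReal.tsum_eq_zero.1 h ⟨u, hu⟩)

end ContinuedFraction

section Flow

variable {par : V → Option V} {root : V} {ψ : V → ℝ≥0∞}

noncomputable def branchRatio (par : V → Option V) (ψ : V → ℝ≥0∞) (v : V) : ℝ≥0∞ :=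
  (par v).elim 1 fun x => ψ v / ∑' u : children par x, ψ u

/-- The paper's `f(v_n) = ∏_{k=1}^n ψ(v_k) / ∑_{u ∈ Chi(v_{k-1})} ψ(u)` along the path
`v_0 = root, …, v_n = v`. -/
noncomputable def flow (par : V → Option V) (root : V) (ψ : V → ℝ≥0∞) (v : V) : ℝ≥0∞ :=
  pathProd par (branchRatio par ψ) (depth par root v) v

theorem pathProd_ne_zero {lam : V → ℝ≥0∞} (h : ∀ v, lam v ≠ 0) (n : ℕ) (v : V) :
    pathProd par lam n v ≠ 0 := by
  induction n generalizing v with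
  | zero => exact one_ne_zero
  | succ n ih => exact mul_ne_zero (h v) (by cases par v <;> simp [ih])

theorem pathProd_ne_top {lam : V → ℝ≥0∞} (h : ∀ v, lam v ≠ ⊤) (n : ℕ) (v : V) :
    pathProd par lam n v ≠ ⊤ := by
  induction n generalizing v with
  | zero => exact ENNReal.one_ne_top
  | succ n ih => exact ENNReal.mul_ne_top (h v) (by cases par v <;> simp [ih])

theorem branchRatio_ne_zero (hS : ∀ v, ∑' u : children par v, ψ u ≠ ⊤) (hψ0 : ∀ v, ψ v ≠ 0)
    (v : V) : branchRatio par ψ v ≠ 0 := by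
  cases h : par v <;> simp [branchRatio, h, ENNReal.div_eq_zero_iff, hψ0, hS]

theorem branchRatio_ne_top (hψ0 : ∀ v, ψ v ≠ 0) (hψ : ∀ v, ψ v ≠ ⊤) (v : V) :
    branchRatio par ψ v ≠ ⊤ := by
  cases h : par v with
  | none => simp [branchRatio, h]
  | some x =>
    simp only [branchRatio, h, Option.elim_some]
    exact (ENNReal.div_lt_top (hψ v) fun hS => hψ0 v (ENNReal.tsum_eq_zero.1 hS ⟨v, h⟩)).ne

theorem tsum_div_tsum_children (hS : ∀ v, ∑' u : children par v, ψ u ≠ ⊤)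
    (hψ0 : ∀ v, ψ v ≠ 0) {v : V} (hv : children par v ≠ ∅) :
    ∑' u : children par v, ψ u / ∑' u' : children par v, ψ u' = 1 := by
  obtain ⟨u, hu⟩ := nonempty_iff_ne_empty.2 hv
  simp only [div_eq_mul_inv, ENNReal.tsum_mul_right]
  exact ENNReal.mul_inv_cancel (fun h => hψ0 u (ENNReal.tsum_eq_zero.1 h ⟨u, hu⟩)) (hS v)

theorem flow_ne_zero (hS : ∀ v, ∑' u : children par v, ψ u ≠ ⊤) (hψ0 : ∀ v, ψ v ≠ 0)
    (v : V) : flow par root ψ v ≠ 0 :=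
  pathProd_ne_zero (branchRatio_ne_zero hS hψ0) _ v

theorem flow_ne_top (hψ0 : ∀ v, ψ v ≠ 0) (hψ : ∀ v, ψ v ≠ ⊤) (v : V) :
    flow par root ψ v ≠ ⊤ :=
  pathProd_ne_top (branchRatio_ne_top hψ0 hψ) _ v

variable (hT : IsDirectedTree par) (hroot : IsRoot par root)
include hT hroot

theorem flow_root : flow par root ψ root = 1 := by
  simp [flow, hT.depth_root hroot, pathProd]

theorem flow_of_parent {v x : V} (h : par v = some x) :
    flow par root ψ v = ψ v / (∑' u : children par x, ψ u) * flow par root ψ x := by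
  rw [flow, hT.depth_of_mem_children hroot h]
  simp [pathProd, branchRatio, h, flow]

theorem tsum_flow_children (hS : ∀ v, ∑' u : children par v, ψ u ≠ ⊤) (hψ0 : ∀ v, ψ v ≠ 0)
    {v : V} (hv : children par v ≠ ∅) :
    ∑' u : children par v, flow par root ψ u = flow par root ψ v := by
  rw [tsum_congr fun u => flow_of_parent hT hroot u.2, ENNReal.tsum_mul_right,
    tsum_div_tsum_children hS hψ0 hv, one_mul]

variable {𝕜 : Type*} [RCLike 𝕜]

theorem backwardInv_flow (hS : ∀ v, ∑' u : children par v, ψ u ≠ ⊤) (hψ0 : ∀ v, ψ v ≠ 0)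
    (hψ : ∀ v, ψ v ≠ ⊤) :
    BackwardInv (children par) fun v => ((flow par root ψ v).toReal : 𝕜) := by
  intro v hv
  have hflow := flow_ne_top (par := par) (root := root) hψ0 hψ
  refine (RCLike.hasSum_ofReal 𝕜).2 ?_
  rw [← tsum_flow_children hT hroot hS hψ0 hv,
    ENNReal.tsum_toReal_eq (f := fun u : children par v => flow par root ψ u) fun u => hflow u]
  refine (ENNReal.summable_toReal ?_).hasSum
  rw [tsum_flow_children hT hroot hS hψ0 hv]
  exact hflow v

theorem ofReal_toReal_flow_of_parent {v x : V} (h : par v = some x) :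
    ((flow par root ψ v).toReal : 𝕜) =
      ((ψ v / ∑' u : children par x, ψ u).toReal : 𝕜) * (flow par root ψ x).toReal := by
  rw [flow_of_parent hT hroot h, ENNReal.toReal_mul, RCLike.ofReal_mul]

end Flow

section Resistance

variable {par : V → Option V} {root : V} {w : V → ℝ≥0∞} {p : ℝ} {𝕜 : Type*} [RCLike 𝕜]

theorem rpC_ne_zero (hp : 0 < p) (hw0 : ∀ v, w v ≠ 0) (v : V) :
    rpC (children par) w p v ≠ 0 :=
  fun h => hw0 v (le_zero_iff.1 (h ▸ le_rpC hp v))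

theorem tsum_rpC_rpow_neg_ne_top (hp : 1 < p)
    (hsum : ∀ v, ∑' u : children par v, w u ^ (-conjExp p) < ⊤) (v : V) :
    ∑' u : children par v, rpC (children par) w p u ^ (-conjExp p) ≠ ⊤ := by
  refine ne_of_lt (lt_of_le_of_lt (ENNReal.tsum_le_tsum fun u => ?_) (hsum v))
  exact rpow_neg_le_rpow_neg (conjExp_pos hp).le (le_rpC (by linarith) _)

theorem rpC_rpow_neg_ne_zero (hfin : FiniteLength par) (hp : 1 < p) (hwt : ∀ v, w v ≠ ⊤)
    (v : V) : rpC (children par) w p v ^ (-conjExp p) ≠ 0 :=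
  rpow_neg_ne_zero (conjExp_pos hp).le (rpC_ne_top hfin hp hwt v)

theorem rpC_rpow_neg_ne_top (hp : 1 < p) (hw0 : ∀ v, w v ≠ 0) (v : V) :
    rpC (children par) w p v ^ (-conjExp p) ≠ ⊤ :=
  rpow_neg_ne_top (conjExp_pos hp).le (rpC_ne_zero (by linarith) hw0 v)

/-- Hölder's inequality over the children of `v`. -/
theorem rpow_mul_cpC_le_tsum_children (hfin : FiniteLength par) (hp : 1 < p)
    (hw0 : ∀ v, w v ≠ 0) (hwt : ∀ v, w v ≠ ⊤) {v : V} {x : ℝ≥0∞} {y : V → ℝ≥0∞}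
    (hx : children par v ≠ ∅ → x ≤ ∑' u : children par v, y u) :
    (x * cpC (children par) w p v) ^ p ≤
      ∑' u : children par v, (y u * rpC (children par) w p u) ^ p := by
  have hp0 : 0 < p := by linarith
  have hq := conjExp_pos hp
  by_cases hv : children par v = ∅
  · simp [cpC_of_children_eq_empty hfin hp hv, ENNReal.zero_rpow_of_pos hp0]
  rw [cpC_of_children_ne_empty hfin hp hv]
  set S := ∑' u : children par v, rpC (children par) w p u ^ (-conjExp p)
  set T := ∑' u : children par v, (y u * rpC (children par) w p u) ^ p
  by_cases hS : S = ⊤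
  · rw [hS, ENNReal.top_rpow_of_neg (by simpa using hq), mul_zero,
      ENNReal.zero_rpow_of_pos hp0]
    exact zero_le
  have hS0 : S ≠ 0 := by
    obtain ⟨u, hu⟩ := nonempty_iff_ne_empty.2 hv
    exact fun h => rpC_rpow_neg_ne_zero hfin hp hwt u (ENNReal.tsum_eq_zero.1 h ⟨u, hu⟩)
  have hxS : x ≤ T ^ (1 / p) * S ^ (1 / conjExp p) :=
    calc x ≤ ∑' u : children par v, y u := hx hv
      _ = ∑' u : children par v, y u * rpC (children par) w p u *
            (rpC (children par) w p u)⁻¹ := tsum_congr fun u => by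
          rw [mul_assoc, ENNReal.mul_inv_cancel (rpC_ne_zero hp0 hw0 u)
            (rpC_ne_top hfin hp hwt u), mul_one]
      _ ≤ T ^ (1 / p) * (∑' u : children par v, (rpC (children par) w p u)⁻¹ ^ conjExp p) ^
            (1 / conjExp p) := tsum_mul_le_Lp_mul_Lq _ _ (holderConjugate_conjExp hp)
      _ = T ^ (1 / p) * S ^ (1 / conjExp p) := by
          simp only [S, ENNReal.inv_rpow, ← ENNReal.rpow_neg]
  calc (x * S ^ (-(1 / conjExp p))) ^ p
      ≤ (T ^ (1 / p) * S ^ (1 / conjExp p) * S ^ (-(1 / conjExp p))) ^ p := by gcongr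
    _ = T := by
      rw [mul_assoc, ← ENNReal.rpow_add _ _ hS0 hS, add_neg_cancel, ENNReal.rpow_zero, mul_one,
        ← ENNReal.rpow_mul, one_div_mul_cancel hp0.ne', ENNReal.rpow_one]

theorem rpow_mul_rpC_le_tsum_descendants (hT : IsDirectedTree par) (hfin : FiniteLength par)
    (hp : 1 < p) (hw0 : ∀ v, w v ≠ 0) (hwt : ∀ v, w v ≠ ⊤) {g : V → 𝕜}
    (hg : BackwardInv (children par) g) (v : V) :
    (‖g v‖ₑ * rpC (children par) w p v) ^ p ≤
      ∑' x : descendants par v, (‖g x‖ₑ * w x) ^ p := by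
  induction v using hfin.induction with
  | step v ih =>
    rw [mul_rpC_rpow (by linarith), hT.tsum_descendants (fun x => (‖g x‖ₑ * w x) ^ p)]
    refine add_le_add_right
      (le_trans ?_ (ENNReal.tsum_le_tsum fun u : children par v => ih u u.2)) _
    exact rpow_mul_cpC_le_tsum_children hfin hp hw0 hwt (y := fun u => ‖g u‖ₑ) fun hv =>
      (hg v hv).tsum_eq ▸ enorm_tsum_le_tsum_enorm

theorem rpC_rpow_le_tsum (hT : IsDirectedTree par) (hroot : IsRoot par root)
    (hfin : FiniteLength par) (hp : 1 < p) (hw0 : ∀ v, w v ≠ 0) (hwt : ∀ v, w v ≠ ⊤) {g : V → 𝕜}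
    (hg : BackwardInv (children par) g) (hg1 : g root = 1) :
    rpC (children par) w p root ^ p ≤ ∑' v, (‖g v‖ₑ * w v) ^ p := by
  have := rpow_mul_rpC_le_tsum_descendants hT hfin hp hw0 hwt hg root
  rwa [hg1, enorm_one, one_mul, hT.descendants_root hroot,
    tsum_univ (fun v => (‖g v‖ₑ * w v) ^ p)] at this

theorem tsum_rpow_eq_of_lpSumOn_eq (hp : 1 < p) {g : V → 𝕜} (hg1 : g root = 1)
    (h : lpSumOn w p univ g = rpC (children par) w p root ∨
      lpSumOn w p {v | v ≠ root} g = cpC (children par) w p root) :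
    ∑' v, (‖g v‖ₑ * w v) ^ p = rpC (children par) w p root ^ p := by
  have hp0 : 0 < p := by linarith
  simp only [lpSumOn, ← enorm_eq_nnnorm, rpow_one_div_eq_iff hp0.ne'] at h
  rcases h with h | h
  · rwa [tsum_univ (fun v => (‖g v‖ₑ * w v) ^ p)] at h
  · rw [← ENNReal.summable.tsum_add_tsum_compl (s := {root}) ENNReal.summable,
      tsum_singleton root (fun v => (‖g v‖ₑ * w v) ^ p),
      show ({root}ᶜ : Set V) = {v | v ≠ root} from rfl, h, hg1, enorm_one, one_mul,
      rpC_rpow hp0]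

/-- With `a = r_p(u)`, `s = ∑_{u' ∈ Chi(v)} r_p(u')^{-p*}` and `c_p(v) = s^{-1/p*}`, this is
`(f(u) r_p(u))^p = (r_p(u)^{-p*} / s) (f(v) c_p(v))^p`; it rests on `(1 - p*) p = -p*` and
`1 + p / p* = p`. -/
theorem rpow_neg_conjExp_div_mul_rpow (hp : 1 < p) {a s : ℝ≥0∞} (ha0 : a ≠ 0) (hat : a ≠ ⊤)
    (hs0 : s ≠ 0) (hst : s ≠ ⊤) (x : ℝ≥0∞) :
    (a ^ (-conjExp p) / s * x * a) ^ p =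
      a ^ (-conjExp p) / s * (x * s ^ (-(1 / conjExp p))) ^ p := by
  have hp0 : 0 < p := by linarith
  have hq : conjExp p * (p - 1) = p := by
    unfold conjExp
    field_simp [sub_ne_zero.2 hp.ne']
  have ha : a ^ (-conjExp p) / s * x * a = a ^ (-conjExp p + 1) * s⁻¹ * x := by
    rw [ENNReal.rpow_add _ _ ha0 hat, ENNReal.rpow_one, div_eq_mul_inv]
    ring
  have hs : s ^ (-p) = s⁻¹ * s ^ (-(1 / conjExp p) * p) := by
    rw [← ENNReal.rpow_neg_one, ← ENNReal.rpow_add _ _ hs0 hst]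
    congr 1
    field_simp [(conjExp_pos hp).ne']
    linarith
  rw [ha, ENNReal.mul_rpow_of_nonneg _ _ hp0.le, ENNReal.mul_rpow_of_nonneg _ _ hp0.le,
    ENNReal.mul_rpow_of_nonneg _ _ hp0.le, ← ENNReal.rpow_mul, ← ENNReal.rpow_mul,
    ENNReal.inv_rpow, ← ENNReal.rpow_neg, hs, show (-conjExp p + 1) * p = -conjExp p by
      linarith]
  simp only [div_eq_mul_inv]
  ring

variable (hT : IsDirectedTree par) (hroot : IsRoot par root) (hfin : FiniteLength par)
  (hp : 1 < p) (hw0 : ∀ v, w v ≠ 0) (hwt : ∀ v, w v ≠ ⊤)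
  (hsum : ∀ v, ∑' u : children par v, w u ^ (-conjExp p) < ⊤)
include hT hroot hfin hp hw0 hwt hsum

theorem tsum_children_flow_mul_rpC_rpow (v : V) :
    ∑' u : children par v, (flow par root (rpC (children par) w p · ^ (-conjExp p)) u *
        rpC (children par) w p u) ^ p =
      (flow par root (rpC (children par) w p · ^ (-conjExp p)) v *
        cpC (children par) w p v) ^ p := by
  by_cases hv : children par v = ∅
  · have := isEmpty_coe_sort.2 hv
    rw [tsum_empty, cpC_of_children_eq_empty hfin hp hv, mul_zero,
      ENNReal.zero_rpow_of_pos (by linarith)]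
  have hq := (conjExp_pos hp).le
  have hS0 : ∑' u : children par v, rpC (children par) w p u ^ (-conjExp p) ≠ 0 := by
    obtain ⟨u, hu⟩ := nonempty_iff_ne_empty.2 hv
    exact fun h => rpow_neg_ne_zero hq (rpC_ne_top hfin hp hwt u)
      (ENNReal.tsum_eq_zero.1 h ⟨u, hu⟩)
  rw [cpC_of_children_ne_empty hfin hp hv, tsum_congr fun u => by
    rw [flow_of_parent hT hroot u.2, rpow_neg_conjExp_div_mul_rpow hp
      (rpC_ne_zero (by linarith) hw0 u) (rpC_ne_top hfin hp hwt u) hS0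
      (tsum_rpC_rpow_neg_ne_top hp hsum v)], ENNReal.tsum_mul_right,
    tsum_div_tsum_children (tsum_rpC_rpow_neg_ne_top hp hsum)
      (fun u => rpow_neg_ne_zero hq (rpC_ne_top hfin hp hwt u)) hv, one_mul]

theorem tsum_descendants_flow_mul_rpow (v : V) :
    ∑' x : descendants par v,
        (flow par root (rpC (children par) w p · ^ (-conjExp p)) x * w x) ^ p =
      (flow par root (rpC (children par) w p · ^ (-conjExp p)) v *
        rpC (children par) w p v) ^ p := by
  induction v using hfin.induction with
  | step v ih =>
    rw [hT.tsum_descendants (fun x => (flow par root _ x * w x) ^ p),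
      tsum_congr fun u : children par v => ih u u.2,
      tsum_children_flow_mul_rpC_rpow hT hroot hfin hp hw0 hwt hsum, mul_rpC_rpow (by linarith)]

theorem tsum_rpow_flow :
    ∑' v, (‖((flow par root (rpC (children par) w p · ^ (-conjExp p)) v).toReal : 𝕜)‖ₑ * w v) ^ p =
      rpC (children par) w p root ^ p := by
  rw [← tsum_univ, ← hT.descendants_root hroot]
  simp only [enorm_ofReal_toReal (flow_ne_top (rpC_rpow_neg_ne_zero hfin hp hwt)
    (rpC_rpow_neg_ne_top hp hw0) _)]
  rw [tsum_descendants_flow_mul_rpow hT hroot hfin hp hw0 hwt hsum, flow_root hT hroot, one_mul]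

theorem lpSumOn_univ_flow :
    lpSumOn w p univ
        (fun v => ((flow par root (rpC (children par) w p · ^ (-conjExp p)) v).toReal : 𝕜)) =
      rpC (children par) w p root := by
  simp only [lpSumOn, ← enorm_eq_nnnorm]
  rw [rpow_one_div_eq_iff (by linarith)]
  exact (tsum_univ _).trans (tsum_rpow_flow hT hroot hfin hp hw0 hwt hsum)

theorem lpSumOn_ne_root_flow :
    lpSumOn w p {v | v ≠ root}
        (fun v => ((flow par root (rpC (children par) w p · ^ (-conjExp p)) v).toReal : 𝕜)) =
      cpC (children par) w p root := by
  simp only [lpSumOn, ← enorm_eq_nnnorm, enorm_ofReal_toReal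
    (flow_ne_top (rpC_rpow_neg_ne_zero hfin hp hwt) (rpC_rpow_neg_ne_top hp hw0) _)]
  rw [rpow_one_div_eq_iff (by linarith), hT.setOf_ne_root hroot,
    hT.tsum_iUnion_descendants_children (fun v => (flow par root _ v * w v) ^ p),
    tsum_congr fun u : children par root =>
      tsum_descendants_flow_mul_rpow hT hroot hfin hp hw0 hwt hsum u,
    tsum_children_flow_mul_rpC_rpow hT hroot hfin hp hw0 hwt hsum, flow_root hT hroot, one_mul]

theorem eq_flow_of_tsum_rpow_eq {g : V → 𝕜}
    (hg : BackwardInv (children par) g) (hg1 : g root = 1)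
    (hgp : ∑' v, (‖g v‖ₑ * w v) ^ p = rpC (children par) w p root ^ p) :
    g = fun v => ((flow par root (rpC (children par) w p · ^ (-conjExp p)) v).toReal : 𝕜) := by
  set f := fun v => ((flow par root (rpC (children par) w p · ^ (-conjExp p)) v).toReal : 𝕜)
  have hf := tsum_rpow_flow (𝕜 := 𝕜) hT hroot hfin hp hw0 hwt hsum
  have hfB : BackwardInv (children par) f := backwardInv_flow hT hroot
    (tsum_rpC_rpow_neg_ne_top hp hsum) (rpC_rpow_neg_ne_zero hfin hp hwt)
    (rpC_rpow_neg_ne_top hp hw0)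
  refine (eq_of_tsum_rpow_le_tsum_rpow_midpoint hp hw0 hwt (f := f) ?_ ?_ ?_).symm
  · rw [hf]
    exact ENNReal.rpow_ne_top_of_nonneg (by linarith) (rpC_ne_top hfin hp hwt root)
  · rw [hf, hgp]
  · rw [hf]
    refine rpC_rpow_le_tsum hT hroot hfin hp hw0 hwt
      (fun v hv => ((hfB v hv).add (hg v hv)).div_const 2) ?_
    simp [f, flow_root hT hroot, hg1]

end Resistance

section ResistanceInf

variable {par : V → Option V} {root : V} {w : V → ℝ≥0∞}

theorem le_rInfC (v : V) : w v ≤ rInfC (children par) w v :=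
  le_max_left _ _

theorem rInfC_ne_zero (hw0 : ∀ v, w v ≠ 0) (v : V) : rInfC (children par) w v ≠ 0 :=
  fun h => hw0 v (le_zero_iff.1 (h ▸ le_rInfC v))

theorem rInfC_inv_ne_zero (hfin : FiniteLength par) (hwt : ∀ v, w v ≠ ⊤) (v : V) :
    (rInfC (children par) w v)⁻¹ ≠ 0 :=
  ENNReal.inv_ne_zero.2 (rInfC_ne_top hfin hwt v)

theorem rInfC_inv_ne_top (hw0 : ∀ v, w v ≠ 0) (v : V) : (rInfC (children par) w v)⁻¹ ≠ ⊤ :=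
  ENNReal.inv_ne_top.2 (rInfC_ne_zero hw0 v)

theorem tsum_rInfC_inv_ne_top (hsum : ∀ v, ∑' u : children par v, (w u)⁻¹ < ⊤) (v : V) :
    ∑' u : children par v, (rInfC (children par) w u)⁻¹ ≠ ⊤ :=
  ne_of_lt (lt_of_le_of_lt (ENNReal.tsum_le_tsum fun _ => ENNReal.inv_le_inv.2 (le_rInfC _))
    (hsum v))

variable (hT : IsDirectedTree par) (hroot : IsRoot par root) (hfin : FiniteLength par)
  (hw0 : ∀ v, w v ≠ 0) (hwt : ∀ v, w v ≠ ⊤)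
include hT hroot hfin hw0 hwt

theorem iSup_children_flow_mul_rInfC (v : V) :
    ⨆ u : children par v,
        flow par root (fun u => (rInfC (children par) w u)⁻¹) u * rInfC (children par) w u =
      flow par root (fun u => (rInfC (children par) w u)⁻¹) v * cInfC (children par) w v := by
  rw [cInfC_eq hfin]
  split_ifs with hv
  · have := isEmpty_coe_sort.2 hv
    rw [iSup_of_empty, mul_zero, ENNReal.bot_eq_zero]
  · have := (nonempty_iff_ne_empty.2 hv).to_subtype
    refine (iSup_congr fun u => ?_).trans iSup_const
    rw [flow_of_parent hT hroot u.2, div_eq_mul_inv, mul_comm, ← mul_assoc, ← mul_assoc,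
      ENNReal.mul_inv_cancel (rInfC_ne_zero hw0 u) (rInfC_ne_top hfin hwt u), one_mul, mul_comm]

theorem iSup_descendants_flow_mul (v : V) :
    ⨆ x : descendants par v, flow par root (fun u => (rInfC (children par) w u)⁻¹) x * w x =
      flow par root (fun u => (rInfC (children par) w u)⁻¹) v * rInfC (children par) w v := by
  induction v using hfin.induction with
  | step v ih =>
    rw [iSup_descendants par (fun x => flow par root _ x * w x),
      iSup_congr fun u : children par v => ih u u.2,
      iSup_children_flow_mul_rInfC hT hroot hfin hw0 hwt, rInfC, mul_max]

variable {𝕜 : Type*} [RCLike 𝕜]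

theorem supNormOn_univ_flow :
    supNormOn w univ
        (fun v => ((flow par root (fun u => (rInfC (children par) w u)⁻¹) v).toReal : 𝕜)) =
      rInfC (children par) w root := by
  simp only [supNormOn, ← enorm_eq_nnnorm, enorm_ofReal_toReal
    (flow_ne_top (rInfC_inv_ne_zero hfin hwt) (rInfC_inv_ne_top hw0) _)]
  rw [← hT.descendants_root hroot, iSup_descendants_flow_mul hT hroot hfin hw0 hwt,
    flow_root hT hroot, one_mul]

theorem supNormOn_ne_root_flow :
    supNormOn w {v | v ≠ root}
        (fun v => ((flow par root (fun u => (rInfC (children par) w u)⁻¹) v).toReal : 𝕜)) =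
      cInfC (children par) w root := by
  simp only [supNormOn, ← enorm_eq_nnnorm, enorm_ofReal_toReal
    (flow_ne_top (rInfC_inv_ne_zero hfin hwt) (rInfC_inv_ne_top hw0) _)]
  rw [hT.setOf_ne_root hroot,
    iSup_iUnion_descendants_children par (fun x => flow par root _ x * w x),
    iSup_congr fun u : children par root => iSup_descendants_flow_mul hT hroot hfin hw0 hwt u,
    iSup_children_flow_mul_rInfC hT hroot hfin hw0 hwt, flow_root hT hroot, one_mul]

end ResistanceInf

/-- Theorem 6.4 / `t-charfinpmin`: on a rooted tree of finite length,
existence (and uniqueness, for `1 < p < ∞`) of backward invariant sequences of minimal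
norm, together with their explicit product formula. The product formula along paths is
expressed by its equivalent recursive form `f v = ratio(v) * f (par v)`, `f root = 1`. -/
theorem statement6
    {𝕜 : Type*} [RCLike 𝕜] {V : Type*} (par : V → Option V) (hTree : IsDirectedTree par)
    (hfin : FiniteLength par) (root : V) (hroot : IsRoot par root)
    (μ : V → 𝕜) (hμ : ∀ v : V, μ v ≠ 0) :
    -- (a) `1 < p < ∞`
    (∀ p : ℝ, 1 < p →
      (∀ v : V, (∑' u : ↥(children par v), nw μ u.1 ^ (-(conjExp p))) < ⊤) →
      ∃ f : V → 𝕜,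
        (BackwardInv (children par) f ∧ f root = 1 ∧
          lpSumOn (nw μ) p Set.univ f = rpC (children par) (nw μ) p root ∧
          lpSumOn (nw μ) p {v : V | v ≠ root} f = cpC (children par) (nw μ) p root ∧
          (∀ v w : V, par v = some w →
            f v = (((rpC (children par) (nw μ) p v ^ (-(conjExp p)) /
                  ∑' u : ↥(children par w),
                    rpC (children par) (nw μ) p u.1 ^ (-(conjExp p))).toReal : 𝕜)) * f w) ∧
          ∀ v : V, ∃ r : ℝ, 0 < r ∧ f v = (r : 𝕜)) ∧
        ∀ g : V → 𝕜, BackwardInv (children par) g → g root = 1 →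
          (lpSumOn (nw μ) p Set.univ g = rpC (children par) (nw μ) p root ∨
            lpSumOn (nw μ) p {v : V | v ≠ root} g = cpC (children par) (nw μ) p root) →
          g = f) ∧
    -- (b) `p = ∞`
    ((∀ v : V, (∑' u : ↥(children par v), (nw μ u.1)⁻¹) < ⊤) →
      ∃ f : V → 𝕜,
        BackwardInv (children par) f ∧ f root = 1 ∧
        supNormOn (nw μ) Set.univ f = rInfC (children par) (nw μ) root ∧
        supNormOn (nw μ) {v : V | v ≠ root} f = cInfC (children par) (nw μ) root ∧
        (∀ v w : V, par v = some w →
          f v = ((((rInfC (children par) (nw μ) v)⁻¹ /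
                ∑' u : ↥(children par w), (rInfC (children par) (nw μ) u.1)⁻¹).toReal : 𝕜)) * f w) ∧
        ∀ v : V, ∃ r : ℝ, 0 < r ∧ f v = (r : 𝕜)) := by
  have hw0 : ∀ v, nw μ v ≠ 0 := fun v => by simpa [nw] using hμ v
  have hwt : ∀ v, nw μ v ≠ ⊤ := fun _ => ENNReal.coe_ne_top
  refine ⟨fun p hp hsum => ?_, fun hsum => ?_⟩
  · have hψ0 := rpC_rpow_neg_ne_zero (par := par) hfin hp hwt
    have hψ := rpC_rpow_neg_ne_top (par := par) hp hw0
    have hS := tsum_rpC_rpow_neg_ne_top (par := par) hp hsum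
    exact ⟨_, ⟨backwardInv_flow hTree hroot hS hψ0 hψ, by simp [flow_root hTree hroot],
      lpSumOn_univ_flow hTree hroot hfin hp hw0 hwt hsum,
      lpSumOn_ne_root_flow hTree hroot hfin hp hw0 hwt hsum,
      fun _ _ h => ofReal_toReal_flow_of_parent hTree hroot h,
      fun v => ⟨_, ENNReal.toReal_pos (flow_ne_zero hS hψ0 v) (flow_ne_top hψ0 hψ v), rfl⟩⟩,
      fun g hg hg1 h => eq_flow_of_tsum_rpow_eq hTree hroot hfin hp hw0 hwt hsum hg hg1
        (tsum_rpow_eq_of_lpSumOn_eq hp hg1 h)⟩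
  · have hψ0 := rInfC_inv_ne_zero (par := par) hfin hwt
    have hψ := rInfC_inv_ne_top (par := par) hw0
    have hS := tsum_rInfC_inv_ne_top (par := par) hsum
    exact ⟨_, backwardInv_flow hTree hroot hS hψ0 hψ, by simp [flow_root hTree hroot],
      supNormOn_univ_flow hTree hroot hfin hw0 hwt,
      supNormOn_ne_root_flow hTree hroot hfin hw0 hwt,
      fun _ _ h => ofReal_toReal_flow_of_parent hTree hroot h,
      fun v => ⟨_, ENNReal.toReal_pos (flow_ne_zero hS hψ0 v) (flow_ne_top hψ0 hψ v), rfl⟩⟩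

end PaperTree
end

section
/- Let V be a countable set, μ=(μ_v)_{v∈V} a weight of nonzero scalars, and f_n∈c_0(V,μ), n≥1, sequences such that ‖f_n‖_{c_0(V,μ)}→0 as n→∞. Then there is a weight μ̃ on V with (μ_v/μ̃_v)_{v∈V}∈c_0(V) such that f_n∈c_0(V,μ̃) for all n≥1 and ‖f_n‖_{c_0(V,μ̃)}→0 as n→∞. -/
open scoped ENNReal NNReal Topology Classical
open Filter

/-!
Write `g n v = f n v * μ v`. The hypotheses say that `g n → 0` uniformly and each `g n` vanishes
at infinity, so `(n, v) ↦ g n v` vanishes at infinity on `ℕ × V` and the majorant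
`H v = ⨆ n, ‖g n v‖` vanishes at infinity on `V`. On a countable `V` one can pick `u > 0` vanishing
at infinity with `H ≤ u ^ 2` (e.g. `u v = √(H v) + 1 / (e v + 1)` for an injection `e : V → ℕ`),
and `μ̃ = μ / u` works: `‖g n v‖ / u v ≤ u v` is small off the finite set `{u ≥ ε}`, and on that
finite set `g n v → 0` pointwise.
-/

namespace PaperTree

theorem tendsto_cofinite_zero_iff_finite_le_norm {V E : Type*} [SeminormedAddGroup E]
    {g : V → E} : Tendsto g cofinite (𝓝 0) ↔ ∀ ε > 0, {v | ε ≤ ‖g v‖}.Finite := by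
  simp only [Metric.tendsto_nhds, dist_zero_right, eventually_cofinite, not_lt]

theorem tendsto_iSup_nnnorm_zero_iff_tendstoUniformly {ι V E : Type*} [SeminormedAddGroup E]
    {g : ι → V → E} {l : Filter ι} :
    Tendsto (fun i => ⨆ v, (‖g i v‖₊ : ℝ≥0∞)) l (𝓝 0) ↔ TendstoUniformly g 0 l := by
  simp only [ENNReal.tendsto_nhds_zero, EMetric.tendstoUniformly_iff, Pi.zero_apply,
    edist_zero_left]
  constructor
  · intro h ε hε
    obtain ⟨δ, hδ, hδε⟩ := exists_between hε
    filter_upwards [h δ hδ] with i hi v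
    exact ((le_iSup (fun v => (‖g i v‖₊ : ℝ≥0∞)) v).trans hi).trans_lt hδε
  · intro h ε hε
    filter_upwards [h ε hε] with i hi
    exact iSup_le fun v => (hi v).le

theorem exists_majorant_tendsto_cofinite_zero {V E : Type*} [SeminormedAddGroup E]
    {g : ℕ → V → E} (hc0 : ∀ n, Tendsto (g n) cofinite (𝓝 0))
    (hg : TendstoUniformly g 0 atTop) :
    ∃ H : V → ℝ, Tendsto H cofinite (𝓝 0) ∧ ∀ n v, ‖g n v‖ ≤ H v := by
  have hbdd (v : V) : BddAbove (Set.range fun n => ‖g n v‖) :=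
    (hg.tendsto_at v).norm.bddAbove_range
  refine ⟨fun v => ⨆ n, ‖g n v‖, ?_, fun n v => le_ciSup (hbdd v) n⟩
  rw [Metric.tendsto_nhds]
  intro ε hε
  obtain ⟨N, hN⟩ := eventually_atTop.1 (Metric.tendstoUniformly_iff.1 hg (ε / 2) (half_pos hε))
  have hsmall : ∀ᶠ v in cofinite, ∀ n < N, ‖g n v‖ < ε / 2 :=
    (Set.finite_lt_nat N).eventually_all.2 fun n _ =>
      (tendsto_zero_iff_norm_tendsto_zero.1 (hc0 n)).eventually (gt_mem_nhds (half_pos hε))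
  filter_upwards [hsmall] with v hv
  have hle : ⨆ n, ‖g n v‖ ≤ ε / 2 := ciSup_le fun n => by
    rcases lt_or_ge n N with hn | hn
    · exact (hv n hn).le
    · simpa using (hN n hn v).le
  rw [dist_zero_right, Real.norm_of_nonneg ((norm_nonneg _).trans (le_ciSup (hbdd v) 0))]
  linarith

theorem exists_pos_tendsto_cofinite_zero_le_sq {V : Type*} [Countable V] {H : V → ℝ}
    (hH0 : ∀ v, 0 ≤ H v) (hH : Tendsto H cofinite (𝓝 0)) :
    ∃ u : V → ℝ, (∀ v, 0 < u v) ∧ Tendsto u cofinite (𝓝 0) ∧ ∀ v, H v ≤ u v ^ 2 := by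
  obtain ⟨e, he⟩ := exists_injective_nat V
  have he' : Tendsto (fun v => 1 / ((e v : ℝ) + 1)) cofinite (𝓝 0) :=
    tendsto_one_div_add_atTop_nhds_zero_nat.comp (Nat.cofinite_eq_atTop ▸ he.tendsto_cofinite)
  refine ⟨fun v => √(H v) + 1 / ((e v : ℝ) + 1), fun v => by positivity, ?_, fun v => ?_⟩
  · simpa using (Real.continuous_sqrt.tendsto 0 |>.comp hH).add he'
  · calc H v = √(H v) ^ 2 := (Real.sq_sqrt (hH0 v)).symm
      _ ≤ _ := by gcongr; exact le_add_of_nonneg_right (by positivity)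

theorem finite_setOf_le_of_tendsto_cofinite_zero {V : Type*} {u : V → ℝ}
    (hu : Tendsto u cofinite (𝓝 0)) {ε : ℝ} (hε : 0 < ε) : {v | ε ≤ u v}.Finite := by
  simpa only [eventually_cofinite, not_lt] using hu.eventually (gt_mem_nhds hε)

theorem norm_inv_smul_le_of_norm_le_sq {E : Type*} [SeminormedAddCommGroup E] [NormedSpace ℝ E]
    {x : E} {r : ℝ} (hr : 0 < r) (hx : ‖x‖ ≤ r ^ 2) : ‖r⁻¹ • x‖ ≤ r := by
  rw [norm_smul, norm_inv, Real.norm_of_nonneg hr.le, inv_mul_le_iff₀ hr, ← sq]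
  exact hx

theorem tendstoUniformly_inv_smul_zero {V E : Type*} [SeminormedAddCommGroup E] [NormedSpace ℝ E]
    {g : ℕ → V → E} {u : V → ℝ} (hu0 : ∀ v, 0 < u v) (hu : Tendsto u cofinite (𝓝 0))
    (hgu : ∀ n v, ‖g n v‖ ≤ u v ^ 2) (hg : TendstoUniformly g 0 atTop) :
    TendstoUniformly (fun n v => (u v)⁻¹ • g n v) 0 atTop := by
  simp only [Metric.tendstoUniformly_iff, Pi.zero_apply, dist_zero_left]
  intro ε hε
  have hpt : ∀ᶠ n in atTop, ∀ v ∈ {v | ε ≤ u v}, ‖(u v)⁻¹ • g n v‖ < ε :=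
    (finite_setOf_le_of_tendsto_cofinite_zero hu hε).eventually_all.2 fun v _ => by
      have hv := (hg.tendsto_at v).const_smul (u v)⁻¹
      rw [Pi.zero_apply, smul_zero] at hv
      exact (tendsto_zero_iff_norm_tendsto_zero.1 hv).eventually (gt_mem_nhds hε)
  filter_upwards [hpt] with n hn v
  by_cases hv : ε ≤ u v
  · exact hn v hv
  · exact (norm_inv_smul_le_of_norm_le_sq (hu0 v) (hgu n v)).trans_lt (not_le.1 hv)

/-- Lemma 8.5 / `l-char0mubil`: if `f_n ∈ c₀(V,μ)` with
`‖f_n‖_{c₀(V,μ)} → 0`, then there is a weight `μ̃` with `(μ_v/μ̃_v)_v ∈ c₀(V)` such that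
`f_n ∈ c₀(V,μ̃)` for all `n` and `‖f_n‖_{c₀(V,μ̃)} → 0`. -/
theorem statement15
    {𝕜 : Type*} [RCLike 𝕜] {V : Type*} [Countable V]
    (μ : V → 𝕜) (hμ : ∀ v : V, μ v ≠ 0) (f : ℕ → V → 𝕜)
    (hmem : ∀ n : ℕ, ∀ ε : ℝ, 0 < ε → {v : V | ε ≤ ‖f n v * μ v‖}.Finite)
    (hnorm : Tendsto (fun n : ℕ => ⨆ v : V, (‖f n v * μ v‖₊ : ℝ≥0∞)) atTop (𝓝 0)) :
    ∃ μt : V → 𝕜, (∀ v : V, μt v ≠ 0) ∧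
      (∀ ε : ℝ, 0 < ε → {v : V | ε ≤ ‖μ v‖ / ‖μt v‖}.Finite) ∧
      (∀ n : ℕ, ∀ ε : ℝ, 0 < ε → {v : V | ε ≤ ‖f n v * μt v‖}.Finite) ∧
      Tendsto (fun n : ℕ => ⨆ v : V, (‖f n v * μt v‖₊ : ℝ≥0∞)) atTop (𝓝 0) := by
  set g : ℕ → V → 𝕜 := fun n v => f n v * μ v
  have hunif : TendstoUniformly g 0 atTop := tendsto_iSup_nnnorm_zero_iff_tendstoUniformly.1 hnorm
  obtain ⟨H, hH, hgH⟩ := exists_majorant_tendsto_cofinite_zero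
    (fun n => tendsto_cofinite_zero_iff_finite_le_norm.2 (hmem n)) hunif
  obtain ⟨u, hu0, hu, hHu⟩ :=
    exists_pos_tendsto_cofinite_zero_le_sq (fun v => (norm_nonneg _).trans (hgH 0 v)) hH
  have hgu (n : ℕ) (v : V) : ‖g n v‖ ≤ u v ^ 2 := (hgH n v).trans (hHu v)
  have hu_ne (v : V) : (u v : 𝕜) ≠ 0 := RCLike.ofReal_ne_zero.2 (hu0 v).ne'
  have hscale (n : ℕ) (v : V) : f n v * (μ v / u v) = (u v)⁻¹ • g n v := by
    simp only [g, RCLike.real_smul_eq_coe_mul, RCLike.ofReal_inv]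
    field_simp
  refine ⟨fun v => μ v / u v, fun v => div_ne_zero (hμ v) (hu_ne v), fun ε hε => ?_,
    fun n ε hε => ?_, ?_⟩
  · convert finite_setOf_le_of_tendsto_cofinite_zero hu hε using 3 with v
    rw [norm_div, RCLike.norm_ofReal, abs_of_pos (hu0 v),
      div_div_cancel₀ (norm_ne_zero_iff.2 (hμ v))]
  · refine (finite_setOf_le_of_tendsto_cofinite_zero hu hε).subset fun v hv => ?_
    rw [Set.mem_ofPred_eq, hscale] at hv
    exact hv.trans (norm_inv_smul_le_of_norm_le_sq (hu0 v) (hgu n v))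
  · rw [tendsto_iSup_nnnorm_zero_iff_tendstoUniformly]
    simpa only [hscale] using tendstoUniformly_inv_smul_zero hu0 hu hgu hunif

end PaperTree
end
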